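/- Let d₁, d₂ ≥ 1 be integers, d = d₁ + d₂, and let v : ℤ^{d₂} → ℝ be a bounded function. Let H = H₀ + V be the bounded self-adjoint operator on ℓ²(ℤ^d; ℂ), where H₀ is the discrete Laplacian and V is the multiplication operator by V(x) = δ(x₁) v(x₂) for x = (x₁,x₂) ∈ ℤ^{d₁}×ℤ^{d₂}. Then the interval [−d, d] (viewed as a subset of ℂ via the real embedding) is contained in the spectrum of H. -/

import Mathlib

/-!
A Weyl sequence. For `E = -(d₁ + d₂) cos θ` the plane wave `x ↦ exp (iθ ∑ₖ xₖ)` is a bounded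
solution of `H₀ψ = Eψ`. Cut it off to the cube `[1, L]^d`: there every coordinate of `x₁` is
positive, so the surface potential does not act on it, and `H₀` feels the cutoff only on a shell
of `(L + 2)^d - (L - 2)^d = O(L^{d-1})` sites, where the defect is at most `2d`. Hence
`‖(E - H)ψ_L‖² / ‖ψ_L‖² = O(1/L) → 0`, so `E - H` has no bounded inverse.
-/

open Complex

/-- The discrete Laplacian part: `(H₀Ψ)(x) = -(1/2) ∑_{|x-y|=1} Ψ(y)` on `ℤ^{d₁} × ℤ^{d₂}`. -/
noncomputable def lapSum (d₁ d₂ : ℕ) (Ψ : (Fin d₁ → ℤ) × (Fin d₂ → ℤ) → ℂ)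
    (x : (Fin d₁ → ℤ) × (Fin d₂ → ℤ)) : ℂ :=
  -(1/2) * ((∑ i : Fin d₁, (Ψ (Function.update x.1 i (x.1 i + 1), x.2)
      + Ψ (Function.update x.1 i (x.1 i - 1), x.2)))
    + ∑ j : Fin d₂, (Ψ (x.1, Function.update x.2 j (x.2 j + 1))
      + Ψ (x.1, Function.update x.2 j (x.2 j - 1))))

open Filter Topology Finset

section Spectrum

variable {𝕜 E : Type*} [NontriviallyNormedField 𝕜] [NormedAddCommGroup E] [NormedSpace 𝕜 E]

theorem mem_spectrum_of_forall_exists_norm_sub_le {T : E →L[𝕜] E} {a : 𝕜}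
    (h : ∀ ε > 0, ∃ ψ : E, ψ ≠ 0 ∧ ‖a • ψ - T ψ‖ ≤ ε * ‖ψ‖) : a ∈ spectrum 𝕜 T := by
  rw [spectrum.mem_iff]
  rintro ⟨u, hu⟩
  set C := ‖(↑u⁻¹ : E →L[𝕜] E)‖
  obtain ⟨ψ, hψ, hsmall⟩ := h (1 / (2 * (C + 1))) (by positivity)
  have hψ_eq : ψ = (↑u⁻¹ : E →L[𝕜] E) (a • ψ - T ψ) := by
    have : (↑u⁻¹ * ↑u : E →L[𝕜] E) ψ = ψ := by rw [u.inv_mul]; rfl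
    rw [hu] at this
    simpa [Algebra.algebraMap_eq_smul_one] using this.symm
  have hle : ‖ψ‖ ≤ C * (1 / (2 * (C + 1)) * ‖ψ‖) := by
    conv_lhs => rw [hψ_eq]
    exact (ContinuousLinearMap.le_opNorm _ _).trans (by gcongr)
  have hC : C * (1 / (2 * (C + 1))) ≤ 1 / 2 := by
    rw [mul_one_div, div_le_div_iff₀ (by positivity) (by norm_num)]
    linarith
  have : ‖ψ‖ ≤ 0 := by nlinarith [norm_nonneg ψ]
  exact hψ (norm_le_zero_iff.mp this)

end Spectrum

theorem Finset.sum_update_add {ι M : Type*} [Fintype ι] [DecidableEq ι] [AddCommMonoid M]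
    (y : ι → M) (i : ι) (c : M) : ∑ k, Function.update y i (y i + c) k = ∑ k, y k + c := by
  rw [sum_update_of_mem (mem_univ i), sum_eq_add_sum_sdiff_singleton_of_mem (mem_univ i) y]
  abel

theorem Complex.exp_add_mul_I_add_exp_sub_mul_I (z w : ℂ) :
    exp (z + w * I) + exp (z - w * I) = 2 * cos w * exp z := by
  rw [two_cos, exp_add, exp_sub, neg_mul, exp_neg]
  ring

theorem tendsto_pow_add_two_sub_pow_sub_two_div_pow (n : ℕ) :
    Tendsto (fun L : ℕ => (((L + 2) ^ n - (L - 2) ^ n : ℕ) : ℝ) / (L : ℝ) ^ n) atTop (𝓝 0) := by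
  have h2L : Tendsto (fun L : ℕ => 2 / (L : ℝ)) atTop (𝓝 0) :=
    tendsto_const_div_atTop_nhds_zero_nat 2
  have hlim := ((tendsto_const_nhds (x := (1 : ℝ))).add h2L).pow n |>.sub
    (((tendsto_const_nhds (x := (1 : ℝ))).sub h2L).pow n)
  rw [add_zero, sub_zero, sub_self] at hlim
  refine hlim.congr' ?_
  filter_upwards [eventually_ge_atTop 2] with L hL
  have hL0 : (L : ℝ) ≠ 0 := by positivity
  rw [Nat.cast_sub (Nat.pow_le_pow_left (by omega) n), sub_div]
  push_cast [hL]
  rw [← div_pow, ← div_pow, add_div, sub_div, div_self hL0]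

abbrev Site (d₁ d₂ : ℕ) : Type := (Fin d₁ → ℤ) × (Fin d₂ → ℤ)

namespace Site

variable {d₁ d₂ : ℕ}

def phase (x : Site d₁ d₂) : ℤ := ∑ i, x.1 i + ∑ j, x.2 j

theorem phase_update_fst (x : Site d₁ d₂) (i : Fin d₁) (c : ℤ) :
    phase (Function.update x.1 i (x.1 i + c), x.2) = phase x + c := by
  simp only [phase, sum_update_add]
  ring

theorem phase_update_snd (x : Site d₁ d₂) (j : Fin d₂) (c : ℤ) :
    phase (x.1, Function.update x.2 j (x.2 j + c)) = phase x + c := by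
  simp only [phase, sum_update_add]
  ring

def IsNear (x y : Site d₁ d₂) : Prop := (∀ i, |y.1 i - x.1 i| ≤ 1) ∧ ∀ j, |y.2 j - x.2 j| ≤ 1

theorem IsNear.symm {x y : Site d₁ d₂} (h : IsNear x y) : IsNear y x :=
  ⟨fun i => abs_sub_comm (x.1 i) (y.1 i) ▸ h.1 i, fun j => abs_sub_comm (x.2 j) (y.2 j) ▸ h.2 j⟩

theorem isNear_update_fst (x : Site d₁ d₂) (i : Fin d₁) {c : ℤ} (hc : |c - x.1 i| ≤ 1) :
    IsNear x (Function.update x.1 i c, x.2) := by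
  refine ⟨fun k => ?_, fun j => by simp⟩
  rcases eq_or_ne k i with rfl | hki
  · simpa using hc
  · simp [hki]

theorem isNear_update_snd (x : Site d₁ d₂) (j : Fin d₂) {c : ℤ} (hc : |c - x.2 j| ≤ 1) :
    IsNear x (x.1, Function.update x.2 j c) := by
  refine ⟨fun i => by simp, fun k => ?_⟩
  rcases eq_or_ne k j with rfl | hkj
  · simpa using hc
  · simp [hkj]

noncomputable def cube (d₁ d₂ : ℕ) (a : ℤ) (n : ℕ) : Finset (Site d₁ d₂) :=
  Fintype.piFinset (fun _ => Ico a (a + n)) ×ˢ Fintype.piFinset (fun _ => Ico a (a + n))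

theorem mem_cube {x : Site d₁ d₂} {a : ℤ} {n : ℕ} :
    x ∈ cube d₁ d₂ a n ↔ (∀ i, a ≤ x.1 i ∧ x.1 i < a + n) ∧ ∀ j, a ≤ x.2 j ∧ x.2 j < a + n := by
  simp [cube]

theorem card_cube (a : ℤ) (n : ℕ) : #(cube d₁ d₂ a n) = n ^ (d₁ + d₂) := by
  simp [cube, card_product, pow_add]

theorem cube_subset_cube {a b : ℤ} {n m : ℕ} (hba : b ≤ a) (hnm : a + n ≤ b + m) :
    cube d₁ d₂ a n ⊆ cube d₁ d₂ b m := by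
  intro x hx
  rw [mem_cube] at hx ⊢
  exact ⟨fun i => ⟨by linarith [(hx.1 i).1], by linarith [(hx.1 i).2]⟩,
    fun j => ⟨by linarith [(hx.2 j).1], by linarith [(hx.2 j).2]⟩⟩

theorem mem_cube_of_isNear {x y : Site d₁ d₂} {a b : ℤ} {n m : ℕ} (hx : x ∈ cube d₁ d₂ a n)
    (hxy : IsNear x y) (hba : b + 1 ≤ a) (hnm : a + n + 1 ≤ b + m) : y ∈ cube d₁ d₂ b m := by
  rw [mem_cube] at hx ⊢
  refine ⟨fun i => ?_, fun j => ?_⟩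
  · have := abs_le.mp (hxy.1 i); have := hx.1 i; omega
  · have := abs_le.mp (hxy.2 j); have := hx.2 j; omega

theorem fst_ne_zero_of_mem_cube (hd₁ : 1 ≤ d₁) {x : Site d₁ d₂} {a : ℤ} {n : ℕ} (ha : 0 < a)
    (hx : x ∈ cube d₁ d₂ a n) : x.1 ≠ 0 := by
  intro h0
  have := ((mem_cube.mp hx).1 ⟨0, hd₁⟩).1
  simp [h0] at this
  omega

end Site

section Laplacian

open Site

variable {d₁ d₂ : ℕ}

theorem lapSum_congr {f g : Site d₁ d₂ → ℂ} {x : Site d₁ d₂} (h : ∀ y, IsNear x y → f y = g y) :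
    lapSum d₁ d₂ f x = lapSum d₁ d₂ g x := by
  unfold lapSum
  congr 2
  · refine sum_congr rfl fun i _ => ?_
    rw [h _ (isNear_update_fst x i (by simp)), h _ (isNear_update_fst x i (by simp))]
  · refine sum_congr rfl fun j _ => ?_
    rw [h _ (isNear_update_snd x j (by simp)), h _ (isNear_update_snd x j (by simp))]

theorem norm_lapSum_le {f : Site d₁ d₂ → ℂ} {M : ℝ} (hf : ∀ y, ‖f y‖ ≤ M) (x : Site d₁ d₂) :
    ‖lapSum d₁ d₂ f x‖ ≤ (d₁ + d₂) * M := by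
  have hpair : ∀ y z, ‖f y + f z‖ ≤ 2 * M := fun y z =>
    (norm_add_le _ _).trans (by linarith [hf y, hf z])
  have h₁ := norm_sum_le_of_le univ fun i (_ : i ∈ univ) =>
    hpair (Function.update x.1 i (x.1 i + 1), x.2) (Function.update x.1 i (x.1 i - 1), x.2)
  have h₂ := norm_sum_le_of_le univ fun j (_ : j ∈ univ) =>
    hpair (x.1, Function.update x.2 j (x.2 j + 1)) (x.1, Function.update x.2 j (x.2 j - 1))
  simp only [sum_const, card_univ, Fintype.card_fin, nsmul_eq_mul] at h₁ h₂
  rw [lapSum, norm_mul, norm_neg, norm_div, norm_one, RCLike.norm_ofNat]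
  linarith [norm_add_le_of_le h₁ h₂]

noncomputable def planeWave (θ : ℝ) (x : Site d₁ d₂) : ℂ := exp (↑(θ * phase x) * I)

theorem norm_planeWave (θ : ℝ) (x : Site d₁ d₂) : ‖planeWave θ x‖ = 1 :=
  norm_exp_ofReal_mul_I _

theorem planeWave_update_fst (θ : ℝ) (x : Site d₁ d₂) (i : Fin d₁) :
    planeWave θ (Function.update x.1 i (x.1 i + 1), x.2)
      + planeWave θ (Function.update x.1 i (x.1 i - 1), x.2) = 2 * cos θ * planeWave θ x := by
  rw [sub_eq_add_neg (x.1 i), planeWave, planeWave, phase_update_fst, phase_update_fst, planeWave,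
    ← exp_add_mul_I_add_exp_sub_mul_I]
  push_cast
  ring_nf

theorem planeWave_update_snd (θ : ℝ) (x : Site d₁ d₂) (j : Fin d₂) :
    planeWave θ (x.1, Function.update x.2 j (x.2 j + 1))
      + planeWave θ (x.1, Function.update x.2 j (x.2 j - 1)) = 2 * cos θ * planeWave θ x := by
  rw [sub_eq_add_neg (x.2 j), planeWave, planeWave, phase_update_snd, phase_update_snd, planeWave,
    ← exp_add_mul_I_add_exp_sub_mul_I]
  push_cast
  ring_nf

theorem lapSum_planeWave (θ : ℝ) (x : Site d₁ d₂) :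
    lapSum d₁ d₂ (planeWave θ) x = -((d₁ + d₂) * cos θ) * planeWave θ x := by
  simp only [lapSum, planeWave_update_fst, planeWave_update_snd, sum_const, card_univ,
    Fintype.card_fin, nsmul_eq_mul]
  ring

end Laplacian

section TruncatedWave

open Site

variable {d₁ d₂ : ℕ}

noncomputable def truncatedWave (θ : ℝ) (L : ℕ) (x : Site d₁ d₂) : ℂ :=
  if x ∈ cube d₁ d₂ 1 L then planeWave θ x else 0

theorem norm_truncatedWave_le (θ : ℝ) (L : ℕ) (x : Site d₁ d₂) : ‖truncatedWave θ L x‖ ≤ 1 := by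
  unfold truncatedWave
  split_ifs <;> simp [norm_planeWave]

theorem truncatedWave_of_notMem {θ : ℝ} {L : ℕ} {x : Site d₁ d₂} (hx : x ∉ cube d₁ d₂ 1 L) :
    truncatedWave θ L x = 0 :=
  if_neg hx

noncomputable def waveDefect (E θ : ℝ) (L : ℕ) (x : Site d₁ d₂) : ℂ :=
  E * truncatedWave θ L x - lapSum d₁ d₂ (truncatedWave θ L) x

theorem norm_waveDefect_le {E : ℝ} (hE : |E| ≤ d₁ + d₂) (θ : ℝ) (L : ℕ) (x : Site d₁ d₂) :
    ‖waveDefect E θ L x‖ ≤ 2 * (d₁ + d₂) := by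
  have hlap := norm_lapSum_le (norm_truncatedWave_le θ L) x
  have hE_wave : ‖(E : ℂ) * truncatedWave θ L x‖ ≤ d₁ + d₂ := by
    rw [norm_mul, norm_real, Real.norm_eq_abs]
    exact (mul_le_of_le_one_right (abs_nonneg E) (norm_truncatedWave_le θ L x)).trans hE
  rw [waveDefect]
  linarith [norm_sub_le ((E : ℂ) * truncatedWave θ L x) (lapSum d₁ d₂ (truncatedWave θ L) x)]

theorem waveDefect_eq_zero {E θ : ℝ} (hθ : (d₁ + d₂) * Real.cos θ = -E) {L : ℕ} (hL : 2 ≤ L)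
    {x : Site d₁ d₂} (hx : x ∉ cube d₁ d₂ 0 (L + 2) \ cube d₁ d₂ 2 (L - 2)) :
    waveDefect E θ L x = 0 := by
  simp only [Finset.mem_sdiff, not_and, not_not] at hx
  by_cases hin : x ∈ cube d₁ d₂ 2 (L - 2)
  · have hwave : truncatedWave θ L x = planeWave θ x :=
      if_pos (cube_subset_cube (by norm_num) (by omega) hin)
    have hlap : lapSum d₁ d₂ (truncatedWave θ L) x = lapSum d₁ d₂ (planeWave θ) x :=
      lapSum_congr fun y hy => if_pos (mem_cube_of_isNear hin hy (by norm_num) (by omega))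
    rw [waveDefect, hwave, hlap, lapSum_planeWave, ← ofReal_cos, ← ofReal_natCast,
      ← ofReal_natCast, ← ofReal_add, ← ofReal_mul, hθ]
    push_cast
    ring
  · have hout : x ∉ cube d₁ d₂ 0 (L + 2) := fun h => hin (hx h)
    have hlap : lapSum d₁ d₂ (truncatedWave θ L) x = lapSum d₁ d₂ 0 x :=
      lapSum_congr fun y hy => truncatedWave_of_notMem fun hy' =>
        hout (mem_cube_of_isNear hy' hy.symm (by norm_num) (by push_cast; omega))
    rw [waveDefect, hlap, truncatedWave_of_notMem fun h =>
      hout (cube_subset_cube (by norm_num) (by push_cast; omega) h)]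
    simp [lapSum]

theorem card_cube_sdiff_cube (L : ℕ) :
    #(cube d₁ d₂ 0 (L + 2) \ cube d₁ d₂ 2 (L - 2)) = (L + 2) ^ (d₁ + d₂) - (L - 2) ^ (d₁ + d₂) := by
  rw [card_sdiff_of_subset (cube_subset_cube (by norm_num) (by omega)), card_cube, card_cube]

end TruncatedWave

theorem lp.norm_sq_eq_sum_of_support_subset {α : Type*} {E : α → Type*}
    [∀ i, NormedAddCommGroup (E i)] (φ : lp E 2) (s : Finset α) (hs : ∀ x ∉ s, φ x = 0) :
    ‖φ‖ ^ 2 = ∑ x ∈ s, ‖φ x‖ ^ 2 := by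
  have h := lp.norm_rpow_eq_tsum (p := 2) (by norm_num) φ
  norm_num at h
  rw [h, tsum_eq_sum fun x hx => by simp [hs x hx]]

section TruncatedWaveLp

open Site

variable {d₁ d₂ : ℕ}

theorem memℓp_truncatedWave (θ : ℝ) (L : ℕ) : Memℓp (truncatedWave (d₁ := d₁) (d₂ := d₂) θ L) 2 :=
  (memℓp_zero ((cube d₁ d₂ 1 L).finite_toSet.subset fun _ hx =>
    by_contra fun h => hx (truncatedWave_of_notMem h))).of_exponent_ge zero_le

noncomputable def truncatedWaveLp (d₁ d₂ : ℕ) (θ : ℝ) (L : ℕ) : lp (fun _ : Site d₁ d₂ => ℂ) 2 :=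
  ⟨truncatedWave θ L, memℓp_truncatedWave θ L⟩

@[simp]
theorem coe_truncatedWaveLp (θ : ℝ) (L : ℕ) :
    ⇑(truncatedWaveLp d₁ d₂ θ L) = truncatedWave θ L :=
  rfl

theorem norm_truncatedWaveLp_sq (θ : ℝ) (L : ℕ) :
    ‖truncatedWaveLp d₁ d₂ θ L‖ ^ 2 = (L : ℝ) ^ (d₁ + d₂) := by
  rw [lp.norm_sq_eq_sum_of_support_subset _ (cube d₁ d₂ 1 L) fun _ => truncatedWave_of_notMem,
    sum_congr rfl (g := fun _ => 1) fun x hx => by simp [truncatedWave, hx, norm_planeWave]]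
  simp [card_cube]

variable (hd₁ : 1 ≤ d₁) (v : (Fin d₂ → ℤ) → ℝ)
  (H : lp (fun _ : Site d₁ d₂ => ℂ) 2 →L[ℂ] lp (fun _ : Site d₁ d₂ => ℂ) 2)
  (hact : ∀ (Ψ : lp (fun _ : Site d₁ d₂ => ℂ) 2) (x : Site d₁ d₂),
    (H Ψ : ∀ _ : Site d₁ d₂, ℂ) x
      = lapSum d₁ d₂ (↑Ψ) x + (if x.1 = 0 then (v x.2 : ℂ) else 0) * Ψ x)
include hd₁ hact

theorem smul_sub_apply_truncatedWaveLp (E θ : ℝ) (L : ℕ) (x : Site d₁ d₂) :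
    ((E : ℂ) • truncatedWaveLp d₁ d₂ θ L - H (truncatedWaveLp d₁ d₂ θ L) : ∀ _, ℂ) x
      = waveDefect E θ L x := by
  have hV : (if x.1 = 0 then (v x.2 : ℂ) else 0) * truncatedWave θ L x = 0 := by
    by_cases hx : x ∈ cube d₁ d₂ 1 L
    · simp [fst_ne_zero_of_mem_cube hd₁ one_pos hx]
    · simp [truncatedWave_of_notMem hx]
  simp only [lp.coeFn_sub, lp.coeFn_smul, Pi.sub_apply, Pi.smul_apply, smul_eq_mul, hact,
    coe_truncatedWaveLp, hV, add_zero, waveDefect]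

theorem norm_smul_sub_apply_truncatedWaveLp_sq_le {E θ : ℝ} (hE : |E| ≤ d₁ + d₂)
    (hθ : (d₁ + d₂) * Real.cos θ = -E) {L : ℕ} (hL : 2 ≤ L) :
    ‖(E : ℂ) • truncatedWaveLp d₁ d₂ θ L - H (truncatedWaveLp d₁ d₂ θ L)‖ ^ 2
      ≤ (2 * (d₁ + d₂)) ^ 2 * (((L + 2) ^ (d₁ + d₂) - (L - 2) ^ (d₁ + d₂) : ℕ) : ℝ) := by
  rw [lp.norm_sq_eq_sum_of_support_subset _ (cube d₁ d₂ 0 (L + 2) \ cube d₁ d₂ 2 (L - 2))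
    fun x hx => by rw [smul_sub_apply_truncatedWaveLp hd₁ v H hact, waveDefect_eq_zero hθ hL hx]]
  calc _ ≤ #(cube d₁ d₂ 0 (L + 2) \ cube d₁ d₂ 2 (L - 2)) • (2 * ((d₁ : ℝ) + d₂)) ^ 2 :=
        sum_le_card_nsmul _ _ _ fun x _ => by
          rw [smul_sub_apply_truncatedWaveLp hd₁ v H hact]
          exact pow_le_pow_left₀ (norm_nonneg _) (norm_waveDefect_le hE θ L x) 2
    _ = _ := by rw [card_cube_sdiff_cube, nsmul_eq_mul, mul_comm]

theorem exists_norm_smul_sub_apply_le {E : ℝ} (hE : E ∈ Set.Icc (-(d₁ + d₂ : ℝ)) (d₁ + d₂))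
    {ε : ℝ} (hε : 0 < ε) :
    ∃ ψ : lp (fun _ : Site d₁ d₂ => ℂ) 2, ψ ≠ 0 ∧ ‖(E : ℂ) • ψ - H ψ‖ ≤ ε * ‖ψ‖ := by
  have hd : (0 : ℝ) < d₁ + d₂ := by positivity
  have hEabs : |E| ≤ d₁ + d₂ := abs_le.mpr hE
  set θ := Real.arccos (-E / (d₁ + d₂))
  have hθ : (d₁ + d₂) * Real.cos θ = -E := by
    rw [Real.cos_arccos (by rw [le_div_iff₀ hd]; linarith [hE.2])
      (by rw [div_le_one hd]; linarith [hE.1])]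
    field_simp
  obtain ⟨L, hsmall, hL⟩ := ((((tendsto_pow_add_two_sub_pow_sub_two_div_pow (d₁ + d₂)).const_mul
    ((2 * ((d₁ : ℝ) + d₂)) ^ 2)).eventually (gt_mem_nhds (by simpa using pow_pos hε 2))).and
    (eventually_ge_atTop 2)).exists
  have hψ := norm_truncatedWaveLp_sq (d₁ := d₁) (d₂ := d₂) θ L
  have hLpos : (0 : ℝ) < (L : ℝ) ^ (d₁ + d₂) := by
    have : (0 : ℝ) < L := by exact_mod_cast (by omega : 0 < L)
    positivity
  refine ⟨truncatedWaveLp d₁ d₂ θ L, fun h => by simp [h] at hψ; linarith, ?_⟩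
  rw [← pow_le_pow_iff_left₀ (norm_nonneg _) (by positivity) two_ne_zero, mul_pow, hψ]
  calc _ ≤ (2 * ((d₁ : ℝ) + d₂)) ^ 2 * (((L + 2) ^ (d₁ + d₂) - (L - 2) ^ (d₁ + d₂) : ℕ) : ℝ) :=
        norm_smul_sub_apply_truncatedWaveLp_sq_le hd₁ v H hact hEabs hθ hL
    _ = (2 * ((d₁ : ℝ) + d₂)) ^ 2 * ((((L + 2) ^ (d₁ + d₂) - (L - 2) ^ (d₁ + d₂) : ℕ) : ℝ)
          / (L : ℝ) ^ (d₁ + d₂)) * (L : ℝ) ^ (d₁ + d₂) := by field_simp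
    _ ≤ ε ^ 2 * (L : ℝ) ^ (d₁ + d₂) := by gcongr

end TruncatedWaveLp

theorem surface_operator_spectrum_contains_laplacian_spectrum
    (d₁ d₂ : ℕ) (hd₁ : 1 ≤ d₁)
    (v : (Fin d₂ → ℤ) → ℝ)
    (H : lp (fun _ : (Fin d₁ → ℤ) × (Fin d₂ → ℤ) => ℂ) 2 →L[ℂ]
        lp (fun _ : (Fin d₁ → ℤ) × (Fin d₂ → ℤ) => ℂ) 2)
    (hact : ∀ (Ψ : lp (fun _ : (Fin d₁ → ℤ) × (Fin d₂ → ℤ) => ℂ) 2)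
        (x : (Fin d₁ → ℤ) × (Fin d₂ → ℤ)),
      (H Ψ : ∀ _ : (Fin d₁ → ℤ) × (Fin d₂ → ℤ), ℂ) x
        = lapSum d₁ d₂ (↑Ψ) x + (if x.1 = 0 then (v x.2 : ℂ) else 0) * Ψ x)
    (E : ℝ) (hE : E ∈ Set.Icc (-(d₁ + d₂ : ℝ)) (d₁ + d₂ : ℝ)) :
    (E : ℂ) ∈ spectrum ℂ H :=
  mem_spectrum_of_forall_exists_norm_sub_le fun _ hε =>
    exists_norm_smul_sub_apply_le hd₁ v H hact hE hε
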